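/- For all simple regular expressions E₁, E₂ over an alphabet α and every nonempty word w over α: ∂_w(E₁+E₂) = ∂_w(E₁) ∪ ∂_w(E₂). Consequently, the number of distinct sets ∂_w(E₁+E₂) for w ranging over nonempty words is at most the product of the number of distinct sets ∂_w(E₁) and the number of distinct sets ∂_w(E₂) (for w ranging over nonempty words). -/

import Mathlib

/-!
A partial derivative by a nonempty word begins with a derivative by a letter, and `∂ₐ`
distributes over `+`; so each `∂_w(E₁ + E₂)` is the union of the pair `(∂_w(E₁), ∂_w(E₂))`.
The counting bound then only needs each family `{∂_w(E) | w ≠ ε}` to be finite. It is, since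
all these sets lie in Antimirov's finite set `pdSupport E`, which contains `∂ₐ(E)` and is
closed under `∂ₐ`.
-/

open scoped Classical

/-- The Antimirov partial derivative of a regular expression with respect to a symbol. -/
noncomputable def aderiv {α : Type*} (a : α) : RegularExpression α → Set (RegularExpression α)
  | .zero => ∅
  | .epsilon => ∅
  | .char b => if b = a then {1} else ∅
  | .plus E₁ E₂ => aderiv a E₁ ∪ aderiv a E₂
  | .comp E₁ E₂ =>
      if [] ∈ E₁.matches' then ((· * E₂) '' aderiv a E₁) ∪ aderiv a E₂
      else (· * E₂) '' aderiv a E₁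
  | .star E₁ => (· * E₁.star) '' aderiv a E₁

/-- Iterated Antimirov partial derivative with respect to a word. -/
noncomputable def aderivWord {α : Type*} : List α → RegularExpression α → Set (RegularExpression α)
  | [], E => {E}
  | a :: w, E => ⋃ F ∈ aderiv a E, aderivWord w F

/-- Left quotient of a language by a word. -/
def lquot {α : Type*} (w : List α) (L : Language α) : Language α := {v | w ++ v ∈ L}

theorem Set.ncard_image2_le {α β γ : Type*} (f : α → β → γ) {s : Set α} {t : Set β}
    (hs : s.Finite) (ht : t.Finite) : (Set.image2 f s t).ncard ≤ s.ncard * t.ncard := by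
  rw [← Set.image_uncurry_prod, ← Set.ncard_prod]
  exact Set.ncard_image_le (hs.prod ht)

section

variable {α : Type*}

theorem aderivWord_cons_plus (a : α) (w : List α) (E₁ E₂ : RegularExpression α) :
    aderivWord (a :: w) (E₁ + E₂) = aderivWord (a :: w) E₁ ∪ aderivWord (a :: w) E₂ :=
  Set.biUnion_union (aderiv a E₁) (aderiv a E₂) (aderivWord w)

theorem aderiv_mul_subset (a : α) (E F : RegularExpression α) :
    aderiv a (E * F) ⊆ (· * F) '' aderiv a E ∪ aderiv a F := by
  show (if [] ∈ E.matches' then _ else _ : Set (RegularExpression α)) ⊆ _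
  split
  · exact subset_rfl
  · exact Set.subset_union_left

/-- Antimirov's `PD(E)`. -/
noncomputable def pdSupport : RegularExpression α → Set (RegularExpression α)
  | .zero => ∅
  | .epsilon => ∅
  | .char _ => {1}
  | .plus E₁ E₂ => pdSupport E₁ ∪ pdSupport E₂
  | .comp E₁ E₂ => (· * E₂) '' pdSupport E₁ ∪ pdSupport E₂
  | .star E₁ => (· * E₁.star) '' pdSupport E₁

theorem pdSupport_finite (E : RegularExpression α) : (pdSupport E).Finite := by
  induction E with
  | zero | epsilon | char _ => simp [pdSupport]
  | plus _ _ ih₁ ih₂ => exact ih₁.union ih₂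
  | comp _ _ ih₁ ih₂ => exact (ih₁.image _).union ih₂
  | star _ ih => exact ih.image _

theorem aderiv_subset_pdSupport (a : α) (E : RegularExpression α) :
    aderiv a E ⊆ pdSupport E := by
  induction E with
  | zero | epsilon => simp [aderiv]
  | char b => by_cases h : b = a <;> simp [aderiv, pdSupport, h]
  | plus _ _ ih₁ ih₂ => exact Set.union_subset_union ih₁ ih₂
  | comp E₁ E₂ ih₁ ih₂ =>
      exact (aderiv_mul_subset a E₁ E₂).trans (Set.union_subset_union (Set.image_mono ih₁) ih₂)
  | star _ ih => exact Set.image_mono ih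

theorem aderiv_subset_pdSupport_of_mem (a : α) {E G : RegularExpression α}
    (hG : G ∈ pdSupport E) : aderiv a G ⊆ pdSupport E := by
  induction E generalizing G with
  | zero | epsilon => simp [pdSupport] at hG
  | char b =>
      rw [pdSupport, Set.mem_singleton_iff] at hG
      subst hG
      exact Set.empty_subset _
  | plus _ _ ih₁ ih₂ =>
      rcases hG with hG | hG
      · exact (ih₁ hG).trans Set.subset_union_left
      · exact (ih₂ hG).trans Set.subset_union_right
  | comp E₁ E₂ ih₁ ih₂ =>
      rcases hG with ⟨G', hG', rfl⟩ | hG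
      · exact (aderiv_mul_subset a G' E₂).trans
          (Set.union_subset_union (Set.image_mono (ih₁ hG')) (aderiv_subset_pdSupport a E₂))
      · exact (ih₂ hG).trans Set.subset_union_right
  | star E₁ ih =>
      obtain ⟨G', hG', rfl⟩ := hG
      refine (aderiv_mul_subset a G' E₁.star).trans (Set.union_subset ?_ ?_)
      · exact Set.image_mono (ih hG')
      · exact Set.image_mono (aderiv_subset_pdSupport a E₁)

theorem aderivWord_subset_pdSupport_of_mem (w : List α) {E G : RegularExpression α}
    (hG : G ∈ pdSupport E) : aderivWord w G ⊆ pdSupport E := by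
  induction w generalizing G with
  | nil => exact Set.singleton_subset_iff.mpr hG
  | cons a w ih =>
      exact Set.iUnion₂_subset fun F hF => ih (aderiv_subset_pdSupport_of_mem a hG hF)

theorem aderivWord_cons_subset_pdSupport (a : α) (w : List α) (E : RegularExpression α) :
    aderivWord (a :: w) E ⊆ pdSupport E :=
  Set.iUnion₂_subset fun _ hF =>
    aderivWord_subset_pdSupport_of_mem w (aderiv_subset_pdSupport a E hF)

def nonemptyWordDerivs (E : RegularExpression α) : Set (Set (RegularExpression α)) :=
  {S | ∃ (a : α) (w : List α), S = aderivWord (a :: w) E}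

theorem nonemptyWordDerivs_finite (E : RegularExpression α) : (nonemptyWordDerivs E).Finite :=
  (pdSupport_finite E).finite_subsets.subset <| by
    rintro _ ⟨a, w, rfl⟩
    exact aderivWord_cons_subset_pdSupport a w E

theorem nonemptyWordDerivs_plus_subset (E₁ E₂ : RegularExpression α) :
    nonemptyWordDerivs (E₁ + E₂) ⊆ Set.image2 (· ∪ ·) (nonemptyWordDerivs E₁) (nonemptyWordDerivs E₂) := by
  rintro _ ⟨a, w, rfl⟩
  exact ⟨_, ⟨a, w, rfl⟩, _, ⟨a, w, rfl⟩, (aderivWord_cons_plus a w E₁ E₂).symm⟩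

end

theorem antimirov_plus {α : Type*} (E₁ E₂ : RegularExpression α) :
    (∀ (a : α) (w : List α),
        aderivWord (a :: w) (E₁ + E₂) = aderivWord (a :: w) E₁ ∪ aderivWord (a :: w) E₂) ∧
      {S | ∃ (a : α) (w : List α), S = aderivWord (a :: w) (E₁ + E₂)}.ncard ≤
        {S | ∃ (a : α) (w : List α), S = aderivWord (a :: w) E₁}.ncard *
          {S | ∃ (a : α) (w : List α), S = aderivWord (a :: w) E₂}.ncard := by
  refine ⟨fun a w => aderivWord_cons_plus a w E₁ E₂, ?_⟩
  have hfin := (nonemptyWordDerivs_finite E₁).image2 (· ∪ ·) (nonemptyWordDerivs_finite E₂)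
  calc (nonemptyWordDerivs (E₁ + E₂)).ncard
      ≤ (Set.image2 (· ∪ ·) (nonemptyWordDerivs E₁) (nonemptyWordDerivs E₂)).ncard :=
        Set.ncard_le_ncard (nonemptyWordDerivs_plus_subset E₁ E₂) hfin
    _ ≤ (nonemptyWordDerivs E₁).ncard * (nonemptyWordDerivs E₂).ncard :=
        Set.ncard_image2_le _ (nonemptyWordDerivs_finite E₁) (nonemptyWordDerivs_finite E₂)
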